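/- Let f ∈ L¹(0,1) with f(x) ≠ 0 for almost every x ∈ (0,1), let a ∈ 𝒜, and let u_a be the associated solution. Then u_a'(x) ≠ 0 for almost every x ∈ (0,1); equivalently, the set {x ∈ (0,1) : u_a is differentiable at x and u_a'(x) = 0} has Lebesgue measure zero. -/

import Mathlib

open MeasureTheory Set Filter

noncomputable section

/-- The admissible set `𝒜`: measurable coefficients with `lam ≤ a ≤ Lam` a.e. on `(0,1)`. -/
def MemAdm (lam Lam : ℝ) (a : ℝ → ℝ) : Prop :=
  Measurable a ∧ ∀ᵐ x ∂(volume.restrict (Ioo (0 : ℝ) 1)), lam ≤ a x ∧ a x ≤ Lam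

/-- The primitive `F(x) = ∫₀ˣ f(t) dt`. -/
def Fprim (f : ℝ → ℝ) (x : ℝ) : ℝ := ∫ t in (0 : ℝ)..x, f t

/-- The constant `C_a = (∫₀¹ 1/a)⁻¹ ∫₀¹ F/a`. -/
def Cconst (f a : ℝ → ℝ) : ℝ :=
  (∫ x in Ioo (0 : ℝ) 1, 1 / a x)⁻¹ * ∫ x in Ioo (0 : ℝ) 1, Fprim f x / a x

/-- `u` is the solution associated with the coefficient `a` and right-hand side `f`:
`u` is continuous on `[0,1]` with `u(0) = u(1) = 0`, differentiable a.e. on `(0,1)`, and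
`a u' = C_a - F` a.e. on `(0,1)`. -/
def IsSol (f a u : ℝ → ℝ) : Prop :=
  ContinuousOn u (Icc 0 1) ∧ u 0 = 0 ∧ u 1 = 0 ∧
  ∀ᵐ x ∂(volume.restrict (Ioo (0 : ℝ) 1)),
    DifferentiableAt ℝ u x ∧ a x * deriv u x = Cconst f a - Fprim f x

open Topology

/-!
Where `u_a' = 0`, the equation `a u_a' = C_a - F` forces `F = C_a`. At a point of a level set of
a real function that is not isolated in that level set, the derivative (if it exists) vanishes,
and the isolated points form a countable set; so `F' = 0` a.e. on `{F = C_a}`, whereas by the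
Lebesgue differentiation theorem `F' = f ≠ 0` a.e.
-/

theorem ae_deriv_eq_zero_of_eq_const {E : Type*} [NormedAddCommGroup E] [NormedSpace ℝ E]
    (μ : Measure ℝ) [NullSingletonClass μ] (g : ℝ → E) (c : E) :
    ∀ᵐ x ∂μ, g x = c → deriv g x = 0 := by
  set L := {x | g x = c}
  have hnull : μ {x ∈ L | 𝓝[L ∩ Ioi x] x = ⊥} = 0 :=
    countable_setOfPred_isolated_right_within.measure_zero μ
  refine measure_eq_zero_iff_ae_notMem.1 hnull |>.mono fun x hx hgx => ?_
  have : (𝓝[L ∩ Ioi x] x).NeBot := ⟨fun h => hx ⟨hgx, h⟩⟩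
  have hfreq : ∃ᶠ y in 𝓝[L ∩ Ioi x] x, g y = c :=
    (eventually_mem_nhdsWithin.mono fun _ hy => hy.1).frequently
  exact deriv_zero_of_frequently_const <|
    hfreq.filter_mono <| nhdsWithin_mono _ fun _ hy => ne_of_gt hy.2

theorem ae_hasDerivAt_Fprim {f : ℝ → ℝ} (hf : IntegrableOn f (Ioo (0 : ℝ) 1)) :
    ∀ᵐ x ∂(volume.restrict (Ioo (0 : ℝ) 1)), HasDerivAt (Fprim f) (f x) x := by
  have hf01 : IntervalIntegrable f volume 0 1 :=
    (intervalIntegrable_iff_integrableOn_Ioo_of_le zero_le_one).2 hf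
  rw [ae_restrict_iff' measurableSet_Ioo]
  filter_upwards [hf01.ae_hasDerivAt_integral] with x hx hx01
  exact hx (Ioo_subset_Icc_self (by simpa [uIcc_of_le] using hx01)) 0 (by simp)

theorem deriv_solution_ae_nonzero_general
    (f : ℝ → ℝ) (hf : IntegrableOn f (Ioo (0 : ℝ) 1))
    (hfne : ∀ᵐ x ∂(volume.restrict (Ioo (0 : ℝ) 1)), f x ≠ 0)
    (a : ℝ → ℝ)
    (ua : ℝ → ℝ) (hua : IsSol f a ua) :
    volume {x ∈ Ioo (0 : ℝ) 1 | DifferentiableAt ℝ ua x ∧ deriv ua x = 0} = 0 := by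
  have hnz : ∀ᵐ x ∂(volume.restrict (Ioo (0 : ℝ) 1)), deriv ua x ≠ 0 := by
    filter_upwards [hua.2.2.2, hfne, ae_hasDerivAt_Fprim hf,
      ae_restrict_of_ae (ae_deriv_eq_zero_of_eq_const volume (Fprim f) (Cconst f a))]
      with x ⟨_, hsol⟩ hfx hF hlevel hu
    rw [hu, mul_zero] at hsol
    exact hfx (hF.deriv ▸ hlevel (sub_eq_zero.1 hsol.symm).symm)
  rw [ae_restrict_iff' measurableSet_Ioo, ae_iff] at hnz
  refine measure_mono_null (fun x hx => ?_) hnz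
  exact fun hx' => hx' hx.1 hx.2.2

/-- If `f ≠ 0` a.e. on `(0,1)`, then the derivative of the associated solution is nonzero
almost everywhere: the set where `u_a` is differentiable with vanishing derivative is null. -/
theorem deriv_solution_ae_nonzero (lam Lam : ℝ) (hlam : 0 < lam) (hlamLam : lam ≤ Lam)
    (f : ℝ → ℝ) (hf : IntegrableOn f (Ioo (0 : ℝ) 1))
    (hfne : ∀ᵐ x ∂(volume.restrict (Ioo (0 : ℝ) 1)), f x ≠ 0)
    (a : ℝ → ℝ) (ha : MemAdm lam Lam a)
    (ua : ℝ → ℝ) (hua : IsSol f a ua) :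
    volume {x ∈ Ioo (0 : ℝ) 1 | DifferentiableAt ℝ ua x ∧ deriv ua x = 0} = 0 :=
  deriv_solution_ae_nonzero_general f hf hfne a ua hua
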